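/- Let A be the (n+1)-dimensional n-ary algebra of type (C_2) over a field F, and let φ be a δ-derivation with δ ≠ ±1, matrix entries β_{ij}, and set θ = Σ_{i=1}^{n-1} β_{ii}. Then β_{nn} = δθ/(1-δ) − (βδ/(1+δ))·β_{n,n+1} and β_{n+1,n+1} = δθ/(1-δ) + (βδ/(1+δ))·β_{n,n+1}, and moreover (1-δ²)·β_{n,n+1} = (β²δ(δ-1)/(1+δ))·β_{n,n+1}. -/

import Mathlib

/-!
Evaluate the δ-derivation identity on the two nonzero basic products, `[e_1,…,e_{n-1},e_{n+1}]`
and `[e_1,…,e_n]`. Expanding `φ(e_j)` in the basis, a summand `[…, e_l, …]` survives only when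
`e_l` is the vector already in that slot (contributing a diagonal entry `β_{jj}`) or the one
missing vector; in the latter case the product omits `e_j`, which vanishes unless `j ∈ {n, n+1}`.
Comparing the `e_n`- and `e_{n+1}`-coordinates gives four linear equations in `β_{nn}`,
`β_{n,n+1}`, `β_{n+1,n}`, `β_{n+1,n+1}`, which are solved using `δ ≠ ±1`.
-/

open Function

namespace AlternatingMap

variable {R M N : Type*} [CommRing R] [AddCommGroup M] [Module R M] [AddCommGroup N] [Module R N]
  {n : ℕ}

theorem map_comp_eq_zero_of_map_comp_succAbove_eq_zero (f : M [⋀^Fin n]→ₗ[R] N)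
    (v : Fin (n + 1) → M) {m : Fin (n + 1)} (hm : f (v ∘ m.succAbove) = 0)
    {g : Fin n → Fin (n + 1)} (hg : ∀ i, g i ≠ m) : f (v ∘ g) = 0 := by
  by_cases hinj : Injective g
  · choose σ hσ using fun i => Fin.exists_succAbove_eq (hg i)
    have hσ_inj : Injective σ := fun i j h => hinj (by rw [← hσ i, ← hσ j, h])
    have hperm : v ∘ g = (v ∘ m.succAbove) ∘ Equiv.ofBijective σ hσ_inj.bijective_of_finite := by
      funext i
      simp [hσ]
    rw [hperm, f.map_perm, hm, smul_zero]
  · exact f.map_eq_zero_of_not_injective _ fun h => hinj h.of_comp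

theorem map_comp_update_succAbove_eq_zero (f : M [⋀^Fin n]→ₗ[R] N) (v : Fin (n + 1) → M)
    {m : Fin (n + 1)} {i : Fin n} (h : f (v ∘ (m.succAbove i).succAbove) = 0) :
    f (v ∘ update m.succAbove i m) = 0 := by
  refine f.map_comp_eq_zero_of_map_comp_succAbove_eq_zero v h fun j => ?_
  rcases eq_or_ne j i with rfl | hj
  · simp
  · simpa [update_of_ne hj] using (Fin.succAbove_right_injective (p := m)).ne hj

theorem map_update_comp_succAbove (f : M [⋀^Fin n]→ₗ[R] N) (b : Module.Basis (Fin (n + 1)) R M)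
    (m : Fin (n + 1)) (i : Fin n) (x : M) :
    f (update (b ∘ m.succAbove) i x) =
      b.repr x (m.succAbove i) • f (b ∘ m.succAbove) +
        b.repr x m • f (b ∘ update m.succAbove i m) := by
  have hvanish : ∀ j ∉ ({m.succAbove i, m} : Finset (Fin (n + 1))),
      b.repr x j • f (update (b ∘ m.succAbove) i (b j)) = 0 := by
    intro j hj
    simp only [Finset.mem_insert, Finset.mem_singleton, not_or] at hj
    obtain ⟨i', rfl⟩ := Fin.exists_succAbove_eq hj.2
    have hi' : i ≠ i' := by rintro rfl; exact hj.1 rfl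
    rw [f.map_eq_zero_of_eq _ (i := i) (j := i') (by simp [update_of_ne hi'.symm]) hi',
      smul_zero]
  conv_lhs => rw [← b.sum_repr x]
  rw [f.map_update_sum, ← Finset.sum_subset (Finset.subset_univ _) fun j _ hj => ?_,
    Finset.sum_pair (Fin.succAbove_ne m i), comp_update]
  · simp only [f.map_update_smul]
    congr 3
    exact update_eq_self i (b ∘ m.succAbove)
  · rw [f.map_update_smul]
    exact hvanish j hj

end AlternatingMap

namespace Fin

variable {k : ℕ}

theorem succAbove_castSucc_of_castSucc_last_le {m : Fin (k + 2)}
    (hm : (last k).castSucc ≤ m) (j : Fin k) :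
    m.succAbove j.castSucc = j.castSucc.castSucc :=
  succAbove_of_castSucc_lt _ _
    ((castSucc_lt_castSucc_iff.mpr (castSucc_lt_last j)).trans_le hm)

theorem update_castSucc_last_last :
    update castSucc (last k) (last (k + 1)) = (last k).castSucc.succAbove := by
  funext j
  induction j using lastCases with
  | last => simp
  | cast j =>
    rw [update_of_ne (castSucc_lt_last j).ne,
      succAbove_castSucc_of_castSucc_last_le le_rfl]

theorem update_succAbove_castSucc_last :
    update (last k).castSucc.succAbove (last k) (last k).castSucc = castSucc := by
  rw [← update_castSucc_last_last, update_idem]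
  exact update_eq_self _ _

end Fin

section DeltaDerivation

variable {R M : Type*} [CommRing R] [AddCommGroup M] [Module R M] {n : ℕ}

def IsDeltaDerivation (f : M [⋀^Fin n]→ₗ[R] M) (δ : R) (φ : M →ₗ[R] M) : Prop :=
  ∀ x : Fin n → M, φ (f x) = δ • ∑ i, f (update x i (φ (x i)))

theorem IsDeltaDerivation.apply_map_comp_succAbove {f : M [⋀^Fin n]→ₗ[R] M} {δ : R}
    {φ : M →ₗ[R] M} (hφ : IsDeltaDerivation f δ φ) (b : Module.Basis (Fin (n + 1)) R M)
    (m : Fin (n + 1)) :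
    φ (f (b ∘ m.succAbove)) =
      δ • ((∑ i, b.repr (φ (b (m.succAbove i))) (m.succAbove i)) • f (b ∘ m.succAbove) +
        ∑ i, b.repr (φ (b (m.succAbove i))) m • f (b ∘ update m.succAbove i m)) := by
  rw [hφ, Finset.sum_smul, ← Finset.sum_add_distrib]
  exact congrArg (δ • ·) (Finset.sum_congr rfl fun i _ => f.map_update_comp_succAbove b m i _)

end DeltaDerivation

theorem typeC2_coeffs_of_equations {F : Type*} [Field F] {δ θ βc x y z w : F}
    (hδ1 : δ ≠ 1) (hδ2 : δ ≠ -1)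
    (hw : w = δ * (θ + x + y * βc)) (hz : z = δ * y)
    (hx : x + βc * z = δ * (θ + w)) (hy : y + βc * w = δ * ((θ + w) * βc + z)) :
    x = δ * θ / (1 - δ) - βc * δ / (1 + δ) * y ∧
    w = δ * θ / (1 - δ) + βc * δ / (1 + δ) * y ∧
    (1 - δ ^ 2) * y = βc ^ 2 * δ * (δ - 1) / (1 + δ) * y := by
  have h1 : (1 : F) - δ ≠ 0 := sub_ne_zero.mpr hδ1.symm
  have h2 : (1 : F) + δ ≠ 0 := fun h => hδ2 (by linear_combination h)
  refine ⟨?_, ?_, ?_⟩ <;> field_simp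
  · linear_combination hx + δ * hw - βc * hz
  · linear_combination hw + δ * hx - δ * βc * hz
  · linear_combination (1 + δ) * hy + δ * (1 + δ) * hz - βc * hw - δ * βc * hx +
      δ * βc ^ 2 * hz

section TypeC2

variable {F A : Type*} [Field F] [AddCommGroup A] [Module F A] {k : ℕ}

/-- Indices are shifted down by one: `(Fin.last k).castSucc` and `Fin.last (k + 1)` stand for
`e_n` and `e_{n+1}`, and `f (b ∘ m.succAbove)` is the product of all basis vectors but `b m`. -/
structure IsTypeC2 (b : Module.Basis (Fin (k + 2)) F A) (f : A [⋀^Fin (k + 1)]→ₗ[F] A)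
    (βc : F) : Prop where
  map_omit_penultimate :
    f (b ∘ (Fin.last k).castSucc.succAbove) = b (Fin.last k).castSucc + βc • b (Fin.last (k + 1))
  map_omit_last : f (b ∘ (Fin.last (k + 1)).succAbove) = b (Fin.last (k + 1))
  map_omit_eq_zero :
    ∀ m, m ≠ (Fin.last k).castSucc → m ≠ Fin.last (k + 1) → f (b ∘ m.succAbove) = 0

/-- The partial trace `θ = β_{11} + ⋯ + β_{n-1,n-1}` of `φ`. -/
noncomputable def leadingTrace (b : Module.Basis (Fin (k + 2)) F A) (φ : A →ₗ[F] A) : F :=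
  ∑ j : Fin k, b.repr (φ (b j.castSucc.castSucc)) j.castSucc.castSucc

variable {b : Module.Basis (Fin (k + 2)) F A} {f : A [⋀^Fin (k + 1)]→ₗ[F] A} {βc δ : F}
  {φ : A →ₗ[F] A}

theorem IsTypeC2.map_comp_update_succAbove_eq_zero (hC : IsTypeC2 b f βc) {m : Fin (k + 2)}
    (hm : (Fin.last k).castSucc ≤ m) (j : Fin k) :
    f (b ∘ update m.succAbove j.castSucc m) = 0 := by
  apply f.map_comp_update_succAbove_eq_zero
  rw [Fin.succAbove_castSucc_of_castSucc_last_le hm]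
  apply hC.map_omit_eq_zero
  · exact (Fin.castSucc_lt_castSucc_iff.mpr (Fin.castSucc_lt_last j)).ne
  · exact (Fin.castSucc_lt_last _).ne

theorem IsTypeC2.apply_last (hC : IsTypeC2 b f βc) (hφ : IsDeltaDerivation f δ φ) :
    φ (b (Fin.last (k + 1))) =
      δ • ((leadingTrace b φ + b.repr (φ (b (Fin.last k).castSucc)) (Fin.last k).castSucc) •
          b (Fin.last (k + 1)) +
        b.repr (φ (b (Fin.last k).castSucc)) (Fin.last (k + 1)) •
          (b (Fin.last k).castSucc + βc • b (Fin.last (k + 1)))) := by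
  have hm : (Fin.last k).castSucc ≤ Fin.last (k + 1) := Fin.le_last _
  have h := hφ.apply_map_comp_succAbove b (Fin.last (k + 1))
  rw [Fin.sum_univ_castSucc, Fin.sum_univ_castSucc] at h
  simp only [Fin.succAbove_castSucc_of_castSucc_last_le hm,
    hC.map_comp_update_succAbove_eq_zero hm, smul_zero, Finset.sum_const_zero, zero_add] at h
  rw [hC.map_omit_last, Fin.succAbove_last_apply, Fin.succAbove_last,
    Fin.update_castSucc_last_last, hC.map_omit_penultimate] at h
  exact h

theorem IsTypeC2.apply_penultimate (hC : IsTypeC2 b f βc) (hφ : IsDeltaDerivation f δ φ) :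
    φ (b (Fin.last k).castSucc + βc • b (Fin.last (k + 1))) =
      δ • ((leadingTrace b φ + b.repr (φ (b (Fin.last (k + 1)))) (Fin.last (k + 1))) •
          (b (Fin.last k).castSucc + βc • b (Fin.last (k + 1))) +
        b.repr (φ (b (Fin.last (k + 1)))) (Fin.last k).castSucc • b (Fin.last (k + 1))) := by
  have hm : (Fin.last k).castSucc ≤ (Fin.last k).castSucc := le_rfl
  have h := hφ.apply_map_comp_succAbove b (Fin.last k).castSucc
  rw [Fin.sum_univ_castSucc, Fin.sum_univ_castSucc] at h
  simp only [Fin.succAbove_castSucc_of_castSucc_last_le hm,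
    hC.map_comp_update_succAbove_eq_zero hm, smul_zero, Finset.sum_const_zero, zero_add] at h
  have hL := hC.map_omit_last
  rw [Fin.succAbove_last] at hL
  rw [hC.map_omit_penultimate, Fin.succAbove_castSucc_self, Fin.succ_last,
    Fin.update_succAbove_castSucc_last, hL] at h
  exact h

theorem IsTypeC2.coeffs_of_isDeltaDerivation (hC : IsTypeC2 b f βc)
    (hφ : IsDeltaDerivation f δ φ) (hδ1 : δ ≠ 1) (hδ2 : δ ≠ -1) :
    let β : Fin (k + 2) → Fin (k + 2) → F := fun i j => b.repr (φ (b i)) j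
    let θ := leadingTrace b φ
    β (Fin.last k).castSucc (Fin.last k).castSucc =
      δ * θ / (1 - δ) - βc * δ / (1 + δ) * β (Fin.last k).castSucc (Fin.last (k + 1)) ∧
    β (Fin.last (k + 1)) (Fin.last (k + 1)) =
      δ * θ / (1 - δ) + βc * δ / (1 + δ) * β (Fin.last k).castSucc (Fin.last (k + 1)) ∧
    (1 - δ ^ 2) * β (Fin.last k).castSucc (Fin.last (k + 1)) =
      βc ^ 2 * δ * (δ - 1) / (1 + δ) * β (Fin.last k).castSucc (Fin.last (k + 1)) := by
  have hne : (Fin.last k).castSucc ≠ Fin.last (k + 1) := (Fin.castSucc_lt_last _).ne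
  have hlast := hC.apply_last hφ
  have hpen := hC.apply_penultimate hφ
  apply typeC2_coeffs_of_equations hδ1 hδ2
  · simpa [hne, mul_add] using congrArg (fun v => b.repr v (Fin.last (k + 1))) hlast
  · simpa [hne, mul_add] using congrArg (fun v => b.repr v (Fin.last k).castSucc) hlast
  · simpa [hne, mul_add] using congrArg (fun v => b.repr v (Fin.last k).castSucc) hpen
  · simpa [hne, mul_add] using congrArg (fun v => b.repr v (Fin.last (k + 1))) hpen

end TypeC2

/-- Type `(C_2)`, `δ ≠ ±1`: formulas for `β_{nn}`, `β_{n+1,n+1}` and the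
constraint `(1-δ²)β_{n,n+1} = (β²δ(δ-1)/(1+δ))·β_{n,n+1}`. -/
theorem delta_derivation_C2_matrix
    {F A : Type*} [Field F] [AddCommGroup A] [Module F A]
    {n : ℕ} (hn : 2 ≤ n)
    (b : Module.Basis (Fin (n + 1)) F A)
    (βc : F)
    (br : AlternatingMap F A A (Fin n))
    (hbr : ∀ i : Fin (n + 1),
      br (b ∘ i.succAbove) =
        if (i : ℕ) = n - 1 then b i + βc • b (Fin.last n)
        else if (i : ℕ) = n then b (Fin.last n)
        else 0)
    (δ : F) (hδ1 : δ ≠ 1) (hδ2 : δ ≠ -1)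
    (φ : A →ₗ[F] A)
    (hφ : ∀ x : Fin n → A,
      φ (br x) = δ • ∑ i, br (Function.update x i (φ (x i))))
    (θ : F)
    (hθ : θ = ∑ k ∈ Finset.univ.filter (fun k : Fin (n + 1) => (k : ℕ) < n - 1),
      b.repr (φ (b k)) k) :
    b.repr (φ (b ⟨n - 1, by omega⟩)) ⟨n - 1, by omega⟩ =
      δ * θ / (1 - δ) - βc * δ / (1 + δ) * b.repr (φ (b ⟨n - 1, by omega⟩)) (Fin.last n) ∧
    b.repr (φ (b (Fin.last n))) (Fin.last n) =
      δ * θ / (1 - δ) + βc * δ / (1 + δ) * b.repr (φ (b ⟨n - 1, by omega⟩)) (Fin.last n) ∧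
    (1 - δ ^ 2) * b.repr (φ (b ⟨n - 1, by omega⟩)) (Fin.last n) =
      βc ^ 2 * δ * (δ - 1) / (1 + δ) * b.repr (φ (b ⟨n - 1, by omega⟩)) (Fin.last n) := by
  obtain ⟨k, rfl⟩ : ∃ k, n = k + 1 := ⟨n - 1, by omega⟩
  have hpen : ∀ h, (⟨k + 1 - 1, h⟩ : Fin (k + 2)) = (Fin.last k).castSucc :=
    fun _ => Fin.ext (by simp)
  have hC : IsTypeC2 b br βc := by
    refine ⟨by simpa using hbr (Fin.last k).castSucc, by simpa using hbr (Fin.last (k + 1)),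
      fun m hmP hmL => ?_⟩
    rw [hbr, if_neg fun h => hmP (Fin.ext (by simpa using h)),
      if_neg fun h => hmL (Fin.ext (by simpa using h))]
  have hθ' : θ = leadingTrace b φ := by
    rw [hθ, Finset.sum_filter, Fin.sum_univ_castSucc, Fin.sum_univ_castSucc]
    simp [leadingTrace]
  simp only [hpen, hθ']
  exact hC.coeffs_of_isDeltaDerivation hφ hδ1 hδ2
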